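/- arXiv:2602.18044 — 3 statements merged into one kernel-verified Lean document; each statement's English description precedes it below -/
import Mathlib

section
/- For any real square matrix A and any natural number i, the i-th power of the symmetric Kronecker product A ⊗_s A equals the symmetric Kronecker product of A^i with itself: (A ⊗_s A)^i = A^i ⊗_s A^i. -/
open Matrix MeasureTheory Kronecker

/-- Index set of unordered pairs `{i,j}` from `Fin n`, represented by ordered pairs `i ≤ j`. -/
abbrev PairIdx (n : ℕ) := {p : Fin n × Fin n // p.1 ≤ p.2}

/-- Symmetric vectorization: diagonal entries with weight 1, off-diagonal with weight √2. -/
noncomputable def svec {n : ℕ} (S : Matrix (Fin n) (Fin n) ℝ) : PairIdx n → ℝ :=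
  fun p => (if p.1.1 = p.1.2 then 1 else Real.sqrt 2) * S p.1.1 p.1.2

/-- The matrix `Q` with `Q vec S = svec S` and `Qᵀ svec S = vec S` for symmetric `S`. -/
noncomputable def Qmat (n : ℕ) : Matrix (PairIdx n) (Fin n × Fin n) ℝ :=
  fun p q =>
    if p.1.1 = p.1.2 then (if q = p.1 then 1 else 0)
    else (1 / Real.sqrt 2) * ((if q = p.1 then 1 else 0) + (if q = (p.1.2, p.1.1) then 1 else 0))

/-- The symmetric Kronecker product `A ⊗ₛ B = ½ Q (A ⊗ B + B ⊗ A) Qᵀ`. -/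
noncomputable def symKron {n : ℕ} (A B : Matrix (Fin n) (Fin n) ℝ) :
    Matrix (PairIdx n) (PairIdx n) ℝ :=
  (1 / 2 : ℝ) • (Qmat n * (A ⊗ₖ B + B ⊗ₖ A) * (Qmat n)ᵀ)

lemma sqrt2_ne : Real.sqrt 2 ≠ 0 := by positivity

lemma sqrt2_sq : Real.sqrt 2 * Real.sqrt 2 = 2 := Real.mul_self_sqrt (by norm_num)

/-- Uniform formula for `Qmat`. -/
lemma Qmat_apply {n : ℕ} (p : PairIdx n) (q : Fin n × Fin n) :
    Qmat n p q = (if p.1.1 = p.1.2 then (1/2 : ℝ) else 1 / Real.sqrt 2) *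
      ((if q = p.1 then 1 else 0) + (if q = (p.1.2, p.1.1) then 1 else 0)) := by
  obtain ⟨⟨a, b⟩, hab⟩ := p
  unfold Qmat
  by_cases h : a = b
  · subst h
    by_cases hq : q = (a, a) <;> simp [hq] <;> norm_num
  · simp [h]

/-- Rows of `Q` are symmetric under swapping the column pair. -/
lemma Qmat_swap {n : ℕ} (p : PairIdx n) (x y : Fin n) :
    Qmat n p (y, x) = Qmat n p (x, y) := by
  obtain ⟨⟨a, b⟩, hab⟩ := p
  rw [Qmat_apply, Qmat_apply]
  have h1 : ((y, x) = ((a, b) : Fin n × Fin n)) ↔ ((x, y) = ((b, a) : Fin n × Fin n)) := by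
    simp only [Prod.mk.injEq]; tauto
  have h2 : ((y, x) = ((b, a) : Fin n × Fin n)) ↔ ((x, y) = ((a, b) : Fin n × Fin n)) := by
    simp only [Prod.mk.injEq]; tauto
  simp only [h1, h2]
  ring

lemma sum_ind_mul {α : Type*} [Fintype α] [DecidableEq α] (a b : α) :
    ∑ q : α, (if q = a then (1:ℝ) else 0) * (if q = b then 1 else 0)
      = if a = b then 1 else 0 := by
  by_cases h : a = b <;> · simp [ite_mul, Finset.sum_ite_eq', h, eq_comm]

/-- `Q Qᵀ = 1`. -/
lemma QQt {n : ℕ} : Qmat n * (Qmat n)ᵀ = 1 := by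
  ext p p'
  obtain ⟨⟨a, b⟩, hab⟩ := p
  obtain ⟨⟨c, d⟩, hcd⟩ := p'
  simp only [mul_apply, transpose_apply, Qmat_apply]
  have expand : ∀ q : Fin n × Fin n,
      ((if a = b then (1/2:ℝ) else 1 / Real.sqrt 2) *
        ((if q = (a, b) then 1 else 0) + (if q = (b, a) then 1 else 0))) *
      ((if c = d then (1/2:ℝ) else 1 / Real.sqrt 2) *
        ((if q = (c, d) then 1 else 0) + (if q = (d, c) then 1 else 0))) =
      (if a = b then (1/2:ℝ) else 1 / Real.sqrt 2) *
      ((if c = d then (1/2:ℝ) else 1 / Real.sqrt 2)) *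
      ((if q = (a, b) then (1:ℝ) else 0) * (if q = (c, d) then 1 else 0) +
       ((if q = (a, b) then (1:ℝ) else 0) * (if q = (d, c) then 1 else 0) +
        ((if q = (b, a) then (1:ℝ) else 0) * (if q = (c, d) then 1 else 0) +
         (if q = (b, a) then (1:ℝ) else 0) * (if q = (d, c) then 1 else 0)))) := by
    intro q; ring
  rw [Finset.sum_congr rfl fun q _ => expand q, ← Finset.mul_sum]
  rw [Finset.sum_add_distrib, Finset.sum_add_distrib, Finset.sum_add_distrib,
    sum_ind_mul, sum_ind_mul, sum_ind_mul, sum_ind_mul]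
  by_cases hac : a = c <;> by_cases hbd : b = d
  · -- equal pairs
    subst hac; subst hbd
    have h1 : (⟨(a, b), hab⟩ : PairIdx n) = ⟨(a, b), hcd⟩ := rfl
    rw [h1, one_apply_eq]
    by_cases h : a = b
    · subst h; simp
      norm_num
    · have h2 : ((a, b) : Fin n × Fin n) ≠ (b, a) := by simp [Prod.mk.injEq]; tauto
      have h3 : ((b, a) : Fin n × Fin n) ≠ (a, b) := by simp [Prod.mk.injEq]; tauto
      simp only [if_neg h, if_pos rfl, if_neg h2, if_neg h3]
      field_simp
      rw [Real.sq_sqrt (by norm_num : (0:ℝ) ≤ 2)]; norm_num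
  all_goals {
    have hne : (⟨(a, b), hab⟩ : PairIdx n) ≠ ⟨(c, d), hcd⟩ := by
      simp [Subtype.ext_iff, Prod.mk.injEq]; tauto
    rw [one_apply_ne hne]
    have e1 : ((a, b) : Fin n × Fin n) ≠ (c, d) := by simp [Prod.mk.injEq]; tauto
    have e4 : ((b, a) : Fin n × Fin n) ≠ (d, c) := by simp [Prod.mk.injEq]; tauto
    have hab' : a ≤ b := hab
    have hcd' : c ≤ d := hcd
    have e2 : ((a, b) : Fin n × Fin n) ≠ (d, c) := by
      intro h
      rw [Prod.mk.injEq] at h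
      obtain ⟨had, hbc⟩ := h
      have hba : b ≤ a := by rw [hbc, had]; exact hcd'
      have h1 : a = b := le_antisymm hab' hba
      have h2 : a = c := by rw [h1, hbc]
      have h3 : b = d := by rw [← h1, had]
      tauto
    have e3 : ((b, a) : Fin n × Fin n) ≠ (c, d) := by
      intro h
      rw [Prod.mk.injEq] at h
      obtain ⟨hbc, had⟩ := h
      have hba : b ≤ a := by rw [hbc, had]; exact hcd'
      have h1 : a = b := le_antisymm hab' hba
      have h2 : a = c := by rw [h1, hbc]
      have h3 : b = d := by rw [← h1, had]
      tauto
    simp [e1, e2, e3, e4] }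

/-- Key projection property: `Qᵀ Q M = M` for row-symmetric `M`. -/
lemma QtQ_mul {n : ℕ} (M : Matrix (Fin n × Fin n) (PairIdx n) ℝ)
    (hM : ∀ a b q, M (a, b) q = M (b, a) q) :
    (Qmat n)ᵀ * (Qmat n * M) = M := by
  ext ⟨a, b⟩ q
  rw [mul_apply]
  by_cases hab : a ≤ b
  · set p0 : PairIdx n := ⟨(a, b), hab⟩ with hp0
    rw [Finset.sum_eq_single p0]
    · -- main term
      rw [transpose_apply, mul_apply, Qmat_apply]
      have inner : ∀ r : Fin n × Fin n, Qmat n p0 r * M r q =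
          (if a = b then (1/2:ℝ) else 1 / Real.sqrt 2) *
          ((if r = (a, b) then 1 else 0) * M r q + (if r = (b, a) then 1 else 0) * M r q) := by
        intro r; rw [Qmat_apply]; ring
      rw [Finset.sum_congr rfl fun r _ => inner r, ← Finset.mul_sum,
        Finset.sum_add_distrib]
      simp only [ite_mul, one_mul, zero_mul, Finset.sum_ite_eq', Finset.mem_univ, if_true]
      rw [hM b a q]
      by_cases h : a = b
      · subst h; simp [hp0]
        ring
      · have key : (1 / Real.sqrt 2) * (1 / Real.sqrt 2) = (1/2 : ℝ) := by
          rw [div_mul_div_comm, sqrt2_sq]; norm_num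
        have hne2 : ((a, b) : Fin n × Fin n) ≠ (b, a) := by simp [Prod.mk.injEq]; tauto
        have h' : ¬ b = a := fun hh => h hh.symm
        simp [h, h', hne2, Prod.mk.injEq, hp0]
        linear_combination 2 * M (a, b) q * key
    · intro p _ hp
      obtain ⟨⟨c, d⟩, hcd⟩ := p
      rw [transpose_apply, Qmat_apply]
      have hcd' : c ≤ d := hcd
      have e1 : ((a, b) : Fin n × Fin n) ≠ (c, d) := by
        intro h
        exact hp (Subtype.ext h.symm)
      have e2 : ((a, b) : Fin n × Fin n) ≠ (d, c) := by
        intro h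
        rw [Prod.mk.injEq] at h
        obtain ⟨had, hbc⟩ := h
        have hba : b ≤ a := by rw [hbc, had]; exact hcd'
        have h1 : a = b := le_antisymm hab hba
        apply hp
        apply Subtype.ext
        show ((c, d) : Fin n × Fin n) = (a, b)
        rw [← hbc, ← had, h1]
      rw [if_neg e1, if_neg e2]
      ring
    · simp
  · have hba : b ≤ a := le_of_not_ge hab
    set p0 : PairIdx n := ⟨(b, a), hba⟩ with hp0
    rw [Finset.sum_eq_single p0]
    · rw [transpose_apply, mul_apply, Qmat_apply]
      have inner : ∀ r : Fin n × Fin n, Qmat n p0 r * M r q =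
          (if b = a then (1/2:ℝ) else 1 / Real.sqrt 2) *
          ((if r = (b, a) then 1 else 0) * M r q + (if r = (a, b) then 1 else 0) * M r q) := by
        intro r; rw [Qmat_apply]; ring
      rw [Finset.sum_congr rfl fun r _ => inner r, ← Finset.mul_sum,
        Finset.sum_add_distrib]
      simp only [ite_mul, one_mul, zero_mul, Finset.sum_ite_eq', Finset.mem_univ, if_true]
      rw [hM b a q]
      have h : ¬ b = a := by intro h; subst h; exact hab le_rfl
      have e1 : ((a, b) : Fin n × Fin n) ≠ (b, a) := by simp [Prod.mk.injEq]; tauto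
      have key : (1 / Real.sqrt 2) * (1 / Real.sqrt 2) = (1/2 : ℝ) := by
        rw [div_mul_div_comm, sqrt2_sq]; norm_num
      have h' : ¬ a = b := fun hh => h hh.symm
      simp [h, h', e1, Prod.mk.injEq, hp0]
      linear_combination 2 * M (a, b) q * key
    · intro p _ hp
      obtain ⟨⟨c, d⟩, hcd⟩ := p
      rw [transpose_apply, Qmat_apply]
      have hcd' : c ≤ d := hcd
      have e1 : ((a, b) : Fin n × Fin n) ≠ (c, d) := by
        intro h
        rw [Prod.mk.injEq] at h
        obtain ⟨hac, hbd⟩ := h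
        exact hab (by rw [hac, hbd]; exact hcd')
      have e2 : ((a, b) : Fin n × Fin n) ≠ (d, c) := by
        intro h
        rw [Prod.mk.injEq] at h
        obtain ⟨had, hbc⟩ := h
        apply hp
        apply Subtype.ext
        show ((c, d) : Fin n × Fin n) = (b, a)
        rw [← hbc, ← had]
      rw [if_neg e1, if_neg e2]
      ring
    · simp

/-- `(B ⊗ B) Qᵀ` is row-symmetric. -/
lemma kron_Qt_symm {n : ℕ} (B : Matrix (Fin n) (Fin n) ℝ) (a b : Fin n) (q : PairIdx n) :
    ((B ⊗ₖ B) * (Qmat n)ᵀ) (a, b) q = ((B ⊗ₖ B) * (Qmat n)ᵀ) (b, a) q := by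
  simp only [mul_apply, transpose_apply, kroneckerMap_apply]
  rw [← Equiv.sum_comp (Equiv.prodComm (Fin n) (Fin n))
    (fun j => B b j.1 * B a j.2 * Qmat n q j)]
  apply Finset.sum_congr rfl
  intro j _
  simp only [Equiv.prodComm_apply, Prod.swap]
  rw [Qmat_swap]
  ring

lemma symKron_eq {n : ℕ} (A : Matrix (Fin n) (Fin n) ℝ) :
    symKron A A = Qmat n * (A ⊗ₖ A) * (Qmat n)ᵀ := by
  unfold symKron
  rw [← two_smul ℝ (A ⊗ₖ A), Matrix.mul_smul, Matrix.smul_mul, smul_smul]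
  norm_num

/-- The `i`-th power of the symmetric Kronecker product `A ⊗ₛ A` equals `A^i ⊗ₛ A^i`. -/
theorem symKron_pow {n : ℕ} (A : Matrix (Fin n) (Fin n) ℝ) (i : ℕ) :
    (symKron A A) ^ i = symKron (A ^ i) (A ^ i) := by
  induction i with
  | zero =>
    rw [pow_zero, pow_zero, symKron_eq, Matrix.one_kronecker_one, Matrix.mul_one, QQt]
  | succ k ih =>
    rw [pow_succ', ih, pow_succ', symKron_eq A, symKron_eq (A ^ k), symKron_eq (A * A ^ k),
      Matrix.mul_kronecker_mul]
    simp only [Matrix.mul_assoc]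
    rw [QtQ_mul (((A ^ k) ⊗ₖ (A ^ k)) * (Qmat n)ᵀ) (fun a b q => kron_Qt_symm (A ^ k) a b q)]
end

section
/- For distinct positive real numbers r₁ < r₂ < ... < r_n and distinct real exponents t₁ < t₂ < ... < t_n, the generalized Vandermonde matrix Z with entries Z_{j,k} = r_j^{t_k} is invertible. -/
open Matrix

/-- A generalized exponential sum with `n` terms vanishing at `n` distinct positive points
has all coefficients zero. -/
lemma expsum_coeffs_eq_zero : ∀ (n : ℕ) (c t x : Fin n → ℝ), StrictMono t → StrictMono x →
    (∀ j, 0 < x j) → (∀ j, ∑ k, c k * (x j) ^ (t k) = 0) → ∀ k, c k = 0 := by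
  intro n
  induction n with
  | zero => intro _ _ _ _ _ _ _ k; exact k.elim0
  | succ n ih =>
    intro c t x ht hx hx0 hsum
    -- divide by x^(t 0)
    set g : ℝ → ℝ := fun y => ∑ k, c k * y ^ (t k - t 0) with hg
    have hgroot : ∀ j, g (x j) = 0 := by
      intro j
      have : g (x j) = (∑ k, c k * (x j) ^ (t k)) / (x j) ^ (t 0) := by
        rw [Finset.sum_div]
        refine Finset.sum_congr rfl fun k _ => ?_
        rw [Real.rpow_sub (hx0 j), mul_div_assoc]
      rw [this, hsum j, zero_div]
    have hderiv : ∀ y : ℝ, 0 < y →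
        HasDerivAt g (∑ k, c k * ((t k - t 0) * y ^ (t k - t 0 - 1))) y := by
      intro y hy
      exact HasDerivAt.fun_sum fun k _ =>
        ((Real.hasDerivAt_rpow_const (p := t k - t 0) (Or.inl hy.ne'))).const_mul (c k)
    -- Rolle on each interval
    have H : ∀ j : Fin n, ∃ y, y ∈ Set.Ioo (x j.castSucc) (x j.succ) ∧
        (∑ k, c k * ((t k - t 0) * y ^ (t k - t 0 - 1))) = 0 := by
      intro j
      have hab : x j.castSucc < x j.succ := hx Fin.castSucc_lt_succ
      have hcont : ContinuousOn g (Set.Icc (x j.castSucc) (x j.succ)) := by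
        intro y hy
        have hy0 : 0 < y := lt_of_lt_of_le (hx0 j.castSucc) hy.1
        exact (hderiv y hy0).continuousAt.continuousWithinAt
      have hfi : g (x j.castSucc) = g (x j.succ) := by rw [hgroot, hgroot]
      obtain ⟨y, hy, hy0⟩ := exists_hasDerivAt_eq_zero hab hcont hfi
        (fun y hy => hderiv y (lt_trans (hx0 j.castSucc) hy.1))
      exact ⟨y, hy, hy0⟩
    choose s hs hs0 using H
    have hs_pos : ∀ j, 0 < s j := fun j => lt_trans (hx0 j.castSucc) (hs j).1
    have hs_mono : StrictMono s := by
      intro j j' hj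
      calc s j < x j.succ := (hs j).2
        _ ≤ x j'.castSucc := hx.monotone (by
            have hj' := Fin.lt_def.mp hj
            rw [Fin.le_def]
            simp only [Fin.val_succ, Fin.coe_castSucc]
            omega)
        _ < s j' := (hs j').1
    set d : Fin n → ℝ := fun k => c k.succ * (t k.succ - t 0) with hd
    set t' : Fin n → ℝ := fun k => t k.succ - t 0 - 1 with ht'
    have ht'_mono : StrictMono t' := fun a b hab => by
      simp only [ht']
      have := ht (Fin.succ_lt_succ_iff.mpr hab)
      linarith
    have hd_sum : ∀ j, ∑ k, d k * (s j) ^ (t' k) = 0 := by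
      intro j
      have := hs0 j
      rw [Fin.sum_univ_succ] at this
      simp only [sub_self, zero_mul, mul_zero, zero_add] at this
      rw [← this]
      refine Finset.sum_congr rfl fun k _ => ?_
      simp only [hd, ht']
      ring
    have hd0 : ∀ k, d k = 0 := ih d t' s ht'_mono hs_mono hs_pos hd_sum
    have hcsucc : ∀ k : Fin n, c k.succ = 0 := by
      intro k
      have hne : t k.succ - t 0 ≠ 0 := by
        have : t 0 < t k.succ := ht (Fin.succ_pos k)
        linarith
      have := hd0 k
      simp only [hd] at this
      exact (mul_eq_zero.mp this).resolve_right hne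
    have hc0 : c 0 = 0 := by
      have := hsum 0
      rw [Fin.sum_univ_succ] at this
      simp only [hcsucc, zero_mul, Finset.sum_const_zero, add_zero] at this
      have hpos : (0:ℝ) < (x 0) ^ (t 0) := Real.rpow_pos_of_pos (hx0 0) _
      exact (mul_eq_zero.mp this).resolve_right hpos.ne'
    intro k
    refine Fin.cases ?_ ?_ k
    · exact hc0
    · exact hcsucc

/-- For distinct positive reals `r₁ < … < r_n` and distinct real exponents `t₁ < … < t_n`,
the generalized Vandermonde matrix `Z_{j,k} = r_j^{t_k}` is invertible. -/
theorem generalized_vandermonde_invertible (n : ℕ) (r t : Fin n → ℝ)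
    (hr0 : ∀ j, 0 < r j) (hr : StrictMono r) (ht : StrictMono t) :
    IsUnit (Matrix.of fun j k : Fin n => (r j) ^ (t k)) := by
  have hdet : (Matrix.of fun j k : Fin n => (r j) ^ (t k)).det ≠ 0 := by
    intro h0
    rw [← Matrix.exists_mulVec_eq_zero_iff] at h0
    obtain ⟨v, hv, hmul⟩ := h0
    apply hv
    funext k
    refine expsum_coeffs_eq_zero n v t r ht hr hr0 (fun j => ?_) k
    have := congrFun hmul j
    simpa [Matrix.mulVec, dotProduct, mul_comm] using this
  exact (Matrix.isUnit_iff_isUnit_det _).mpr (isUnit_iff_ne_zero.mpr hdet)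
end

section
/- Every real 2m×2m symmetric positive-definite matrix Γ satisfying (ΓΩ)² = −1 can be written as Γ = [[A, AB], [BA, BAB + A^{-1}]] for some real symmetric m×m matrices A, B with A > 0; conversely every matrix of this form with A symmetric positive definite and B symmetric satisfies (ΓΩ)² = −1. -/
open Matrix

/-- The standard symplectic form on `ℝ^{2m}`. -/
def Omega (m : ℕ) : Matrix (Fin m ⊕ Fin m) (Fin m ⊕ Fin m) ℝ :=
  Matrix.fromBlocks 0 1 (-1) 0

lemma sq_blocks {m : ℕ} (A C C' D : Matrix (Fin m) (Fin m) ℝ) :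
    (Matrix.fromBlocks A C C' D * Omega m) ^ 2 =
      Matrix.fromBlocks (C * C - A * D) (A * C' - C * A) (D * C - C' * D) (C' * C' - D * A) := by
  rw [pow_two, Omega]
  simp [Matrix.fromBlocks_multiply, Matrix.mul_neg, Matrix.neg_mul, neg_neg,
    ← sub_eq_add_neg, neg_add_eq_sub]

lemma negone_blocks {m : ℕ} :
    (-1 : Matrix (Fin m ⊕ Fin m) (Fin m ⊕ Fin m) ℝ) =
      Matrix.fromBlocks (-1) 0 0 (-1) := by
  have h := congrArg Neg.neg (Matrix.fromBlocks_one (l := Fin m) (m := Fin m) (α := ℝ))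
  rw [Matrix.fromBlocks_neg] at h
  simpa using h.symm

/-- A symmetric positive-definite `Γ` with `(ΓΩ)² = −1` has the form
`[[A, AB], [BA, BAB + A⁻¹]]` with `A, B` symmetric and `A > 0`; and conversely any matrix
of this form satisfies `(ΓΩ)² = −1`. -/
theorem pure_covariance_parameterization (m : ℕ) :
    (∀ Γ : Matrix (Fin m ⊕ Fin m) (Fin m ⊕ Fin m) ℝ, Γ.PosDef →
      (Γ * Omega m) ^ 2 = -1 →
      ∃ A B : Matrix (Fin m) (Fin m) ℝ, A.IsSymm ∧ B.IsSymm ∧ A.PosDef ∧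
        Γ = Matrix.fromBlocks A (A * B) (B * A) (B * A * B + A⁻¹)) ∧
    (∀ A B : Matrix (Fin m) (Fin m) ℝ, A.IsSymm → B.IsSymm → A.PosDef →
      (Matrix.fromBlocks A (A * B) (B * A) (B * A * B + A⁻¹) * Omega m) ^ 2 = -1) := by
  constructor
  · intro Γ hΓ hsq
    set A := Γ.toBlocks₁₁ with hAdef
    set C := Γ.toBlocks₁₂ with hCdef
    set C' := Γ.toBlocks₂₁ with hC'def
    set D := Γ.toBlocks₂₂ with hDdef
    have hΓb : Γ = Matrix.fromBlocks A C C' D := (Matrix.fromBlocks_toBlocks Γ).symm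
    have hΓsymm : Γᵀ = Γ := by
      have := hΓ.isHermitian
      rwa [Matrix.IsHermitian, Matrix.conjTranspose_eq_transpose_of_trivial] at this
    have hAsymm : Aᵀ = A := by
      ext i j
      have := congrFun (congrFun hΓsymm (Sum.inl i)) (Sum.inl j)
      simpa [hAdef, Matrix.toBlocks₁₁, Matrix.transpose_apply] using this
    have hC' : C' = Cᵀ := by
      ext i j
      have := congrFun (congrFun hΓsymm (Sum.inr i)) (Sum.inl j)
      simpa [hC'def, hCdef, Matrix.toBlocks₂₁, Matrix.toBlocks₁₂, Matrix.transpose_apply] using this.symm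
    -- A is positive definite
    have hA : A.PosDef := by
      refine Matrix.PosDef.of_dotProduct_mulVec_pos ?_ ?_
      · rwa [Matrix.IsHermitian, Matrix.conjTranspose_eq_transpose_of_trivial]
      · intro x hx
        have hy : (Sum.elim x 0 : Fin m ⊕ Fin m → ℝ) ≠ 0 := by
          intro h
          apply hx
          ext i
          exact congrFun h (Sum.inl i)
        have := hΓ.dotProduct_mulVec_pos hy
        rw [hΓb] at this
        simpa [Matrix.fromBlocks_mulVec, sumElim_dotProduct_sumElim,
          Matrix.mulVec_zero, star_trivial] using this
    have hdet : IsUnit A.det := isUnit_iff_ne_zero.2 hA.det_pos.ne'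
    have hAr : A * A⁻¹ = 1 := Matrix.mul_nonsing_inv A hdet
    have hAl : A⁻¹ * A = 1 := Matrix.nonsing_inv_mul A hdet
    have hAinvsymm : (A⁻¹)ᵀ = A⁻¹ := by
      rw [Matrix.transpose_nonsing_inv, hAsymm]
    -- extract the four block equations
    rw [hΓb, sq_blocks, negone_blocks, Matrix.fromBlocks_inj] at hsq
    obtain ⟨eq1, eq2, eq3, eq4⟩ := hsq
    -- eq2 : A * C' - C * A = 0
    have heq2 : A * Cᵀ = C * A := by rw [← hC']; linear_combination (norm := noncomm_ring) eq2
    set B := A⁻¹ * C with hBdef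
    have hAB : A * B = C := by rw [hBdef, ← mul_assoc, hAr, one_mul]
    have hBsymm : Bᵀ = B := by
      rw [hBdef, Matrix.transpose_mul, hAinvsymm]
      have : Cᵀ = A⁻¹ * C * A := by
        rw [mul_assoc, ← heq2, ← mul_assoc, hAl, one_mul]
      rw [this, mul_assoc, mul_assoc, hAr, mul_one]
    have hBA : B * A = C' := by
      rw [hC', ← hAB, Matrix.transpose_mul, hBsymm, hAsymm]
    have hD : D = B * A * B + A⁻¹ := by
      have hAD : A * D = C * C + 1 := by linear_combination (norm := noncomm_ring) -eq1
      have : D = A⁻¹ * (A * D) := by rw [← mul_assoc, hAl, one_mul]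
      rw [this, hAD, mul_add, mul_one, ← mul_assoc, ← hBdef, ← hAB, ← mul_assoc]
    exact ⟨A, B, hAsymm, hBsymm, hA, by rw [hΓb, hD, hBA, hAB]⟩
  · intro A B hAs hBs hA
    have hdet : IsUnit A.det := isUnit_iff_ne_zero.2 hA.det_pos.ne'
    have hAr : A * A⁻¹ = 1 := Matrix.mul_nonsing_inv A hdet
    have hAl : A⁻¹ * A = 1 := Matrix.nonsing_inv_mul A hdet
    have hAl' : ∀ X : Matrix (Fin m) (Fin m) ℝ, A⁻¹ * (A * X) = X := by
      intro X; rw [← mul_assoc, hAl, one_mul]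
    rw [sq_blocks, negone_blocks, Matrix.fromBlocks_inj]
    refine ⟨?_, ?_, ?_, ?_⟩
    · simp only [mul_add, add_mul, mul_assoc, hAr, hAl, hAl', mul_one, one_mul]
      abel
    · simp only [mul_assoc]
      abel
    · simp only [mul_add, add_mul, mul_assoc, hAr, hAl, hAl', mul_one, one_mul]
      abel
    · simp only [mul_add, add_mul, mul_assoc, hAr, hAl, hAl', mul_one, one_mul]
      abel
end
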